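/- arXiv:2511.06950 — 8 statements merged into one kernel-verified Lean document; each statement's English description precedes it below -/
import Mathlib

section
/- Let V be a finite nonempty type, let E : V → V → Prop be a directed graph, and let Y : Set V be a set of output nodes. Assume the digraph is cyclic, i.e., there exists a permutation σ of V such that E i (σ i) holds for every i : V, and assume every node is output-connected, i.e., for every i : V there exists y ∈ Y with Relation.ReflTransGen E i y. Then there exists a matrix A : Matrix V V ℝ realizing the digraph pattern exactly, i.e., for all i j : V, A i j ≠ 0 ↔ E j i, such that the pair (A, C_Y) is observable, where C_Y : Matrix Y V ℝ is defined by C_Y y j = if (y : V) = j then 1 else 0. (Sufficiency direction of Theorem 1: a cyclic, output-connected system digraph is structurally observable.) -/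
/-!
Observability of `(A, C)` is the nonvanishing of the Gram determinant of the truncated
observability matrix, a polynomial in the entries of `A`. Hence it suffices to exhibit one
observable matrix whose support lies inside the pattern: a generic choice of the pattern entries
then realizes the pattern exactly and stays observable.

The witness is built from the cycle cover `σ` and a depth function (distance to the outputs) with
a successor map lowering it. Every `σ`-cycle is weighted by its own positive integer, and on every
cycle that misses the outputs, a node of least depth feeds its successor. The cycles form a forest
rooted at cycles through outputs. For an eigenvector `v` with eigenvalue `μ`, a cycle of the
support of `v` fed by no other cycle of the support satisfies `μ ^ orderOf σ = weight ^ orderOf σ`,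
so there is only one such cycle. As the cycles form a forest, every cycle of the support is then
fed by at most one other one; this forces `v` to vanish nowhere on it and the cycle it feeds to lie
in the support as well. Descending, the support reaches a root, so `v` does not vanish on all
outputs.
-/

open Equiv Function Matrix Polynomial Relation

namespace Matrix

variable {R S : Type*} [CommRing R] [CommRing S] {n o : Type*} [Fintype n] [DecidableEq n]

def IsObservable (A : Matrix n n R) (C : Matrix o n R) : Prop :=
  ∀ x : n → R, (∀ k : ℕ, C *ᵥ (A ^ k *ᵥ x) = 0) → x = 0

theorem mulVec_pow_mulVec_eq_zero_of_lt_card {A : Matrix n n R} {C : Matrix o n R} {x : n → R}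
    (h : ∀ k < Fintype.card n, C *ᵥ (A ^ k *ᵥ x) = 0) (k : ℕ) : C *ᵥ (A ^ k *ᵥ x) = 0 := by
  nontriviality R
  rcases isEmpty_or_nonempty n with hn | hn
  · simp [Subsingleton.elim x 0]
  have hdeg : (X ^ k %ₘ A.charpoly).natDegree < Fintype.card n := by
    rw [← A.charpoly_natDegree_eq_dim]
    refine natDegree_modByMonic_lt _ A.charpoly_monic fun h1 => ?_
    have := A.charpoly_natDegree_eq_dim
    rw [h1, natDegree_one] at this
    exact Fintype.card_ne_zero this.symm
  rw [A.pow_eq_aeval_mod_charpoly, aeval_eq_sum_range' hdeg, sum_mulVec, mulVec_sum]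
  refine Finset.sum_eq_zero fun i hi => ?_
  rw [smul_mulVec, mulVec_smul, h i (Finset.mem_range.1 hi), smul_zero]

def observabilityMatrix (A : Matrix n n R) (C : Matrix o n R) :
    Matrix (Fin (Fintype.card n) × o) n R :=
  of fun p => (C * A ^ (p.1 : ℕ)) p.2

theorem isObservable_iff_observabilityMatrix {A : Matrix n n R} {C : Matrix o n R} :
    IsObservable A C ↔ ∀ x, observabilityMatrix A C *ᵥ x = 0 → x = 0 := by
  have key : ∀ x, observabilityMatrix A C *ᵥ x = 0 ↔
      ∀ k < Fintype.card n, C *ᵥ (A ^ k *ᵥ x) = 0 := by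
    intro x
    simp only [funext_iff, Prod.forall, Fin.forall_iff, mulVec_mulVec]
    rfl
  refine forall_congr' fun x => ?_
  rw [key]
  exact ⟨fun h hx => h (mulVec_pow_mulVec_eq_zero_of_lt_card hx),
    fun h hx => h fun k _ => hx k⟩

theorem observabilityMatrix_map (f : R →+* S) (A : Matrix n n R) (C : Matrix o n R) :
    observabilityMatrix (A.map f) (C.map f) = (observabilityMatrix A C).map f := by
  ext p j
  change (C.map f * A.map f ^ (p.1 : ℕ)) p.2 j = f ((C * A ^ (p.1 : ℕ)) p.2 j)
  rw [← f.mapMatrix_apply A, ← map_pow, f.mapMatrix_apply, ← Matrix.map_mul, map_apply]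

theorem IsObservable.of_map {f : R →+* S} (hf : Function.Injective f) {A : Matrix n n R}
    {C : Matrix o n R} (h : IsObservable (A.map f) (C.map f)) : IsObservable A C := by
  intro x hx
  have hfx : f ∘ x = 0 := h _ fun k => by
    have hAx : (A ^ k).map f *ᵥ (f ∘ x) = f ∘ (A ^ k *ᵥ x) :=
      funext fun j => (f.map_mulVec _ _ j).symm
    ext i
    rw [← f.mapMatrix_apply A, ← map_pow, f.mapMatrix_apply, hAx, ← f.map_mulVec, hx k]
    simp
  ext i
  exact hf (by simpa using congrFun hfx i)

theorem isObservable_of_forall_eigenvector {K : Type*} [Field K] [IsAlgClosed K]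
    {A : Matrix n n K} {C : Matrix o n K}
    (h : ∀ (v : n → K) (μ : K), A *ᵥ v = μ • v → C *ᵥ v = 0 → v = 0) : IsObservable A C := by
  intro x hx
  let N : Submodule K (n → K) := ⨅ k : ℕ, LinearMap.ker (C * A ^ k).mulVecLin
  have mem_N : ∀ u, u ∈ N ↔ ∀ k : ℕ, C *ᵥ (A ^ k *ᵥ u) = 0 := by
    intro u
    simp [N, Submodule.mem_iInf, mulVec_mulVec]
  have hAN : ∀ u ∈ N, A.mulVecLin u ∈ N := by
    intro u hu
    rw [mem_N] at hu ⊢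
    intro k
    rw [mulVecLin_apply, mulVec_mulVec u (A ^ k) A, ← pow_succ]
    exact hu (k + 1)
  by_contra hx0
  have : Nontrivial N := ⟨⟨⟨x, (mem_N x).2 hx⟩, 0, fun h => hx0 (congrArg Subtype.val h)⟩⟩
  obtain ⟨μ, hμ⟩ := Module.End.exists_eigenvalue (A.mulVecLin.restrict hAN)
  obtain ⟨⟨v, hvN⟩, hv⟩ := hμ.exists_hasEigenvector
  have hAv : A *ᵥ v = μ • v := congrArg Subtype.val hv.apply_eq_smul
  exact hv.2 (Subtype.ext (h v μ hAv (by simpa using (mem_N v).1 hvN 0)))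

variable [Fintype o]

def observabilityGramDet (A : Matrix n n R) (C : Matrix o n R) : R :=
  ((observabilityMatrix A C)ᵀ * observabilityMatrix A C).det

theorem observabilityGramDet_map (f : R →+* S) (A : Matrix n n R) (C : Matrix o n R) :
    observabilityGramDet (A.map f) (C.map f) = f (observabilityGramDet A C) := by
  rw [observabilityGramDet, observabilityGramDet, f.map_det, observabilityMatrix_map,
    f.mapMatrix_apply, Matrix.map_mul, transpose_map]

theorem isObservable_iff_observabilityGramDet_ne_zero {A : Matrix n n ℝ} {C : Matrix o n ℝ} :
    IsObservable A C ↔ observabilityGramDet A C ≠ 0 := by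
  rw [isObservable_iff_observabilityMatrix, observabilityGramDet,
    ← conjTranspose_eq_transpose_of_trivial, Ne, ← exists_mulVec_eq_zero_iff]
  simp only [conjTranspose_mul_self_mulVec_eq_zero, not_exists, not_and, not_imp_not]

theorem exists_isObservable_of_support_subset {P : n → n → Prop} {C : Matrix o n ℝ}
    {A₀ : Matrix n n ℝ} (hA₀ : ∀ i j, A₀ i j ≠ 0 → P i j) (h : IsObservable A₀ C) :
    ∃ A : Matrix n n ℝ, (∀ i j, A i j ≠ 0 ↔ P i j) ∧ IsObservable A C := by
  classical
  let pattern (w : n × n → ℝ) : Matrix n n ℝ := of fun i j => if P i j then w (i, j) else 0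
  let G : Matrix n n (MvPolynomial (n × n) ℝ) :=
    of fun i j => if P i j then MvPolynomial.X (i, j) else 0
  have eval_gramDet : ∀ w, MvPolynomial.eval w (observabilityGramDet G (C.map MvPolynomial.C)) =
      observabilityGramDet (pattern w) C := by
    intro w
    rw [← observabilityGramDet_map]
    congr 1
    · ext i j
      by_cases hij : P i j <;> simp [G, pattern, hij]
    · ext
      simp
  have pattern_A₀ : pattern (fun q => A₀ q.1 q.2) = A₀ := by
    ext i j
    by_cases hij : P i j
    · simp [pattern, hij]
    · simpa [pattern, hij] using (not_not.1 (mt (hA₀ i j) hij)).symm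
  let Q := observabilityGramDet G (C.map MvPolynomial.C) *
    ∏ q ∈ Finset.univ.filter (fun q : n × n => P q.1 q.2), MvPolynomial.X q
  have hQ : Q ≠ 0 := by
    refine mul_ne_zero (fun h0 => ?_)
      (Finset.prod_ne_zero_iff.2 fun q _ => MvPolynomial.X_ne_zero q)
    have := eval_gramDet fun q => A₀ q.1 q.2
    rw [h0, map_zero, pattern_A₀] at this
    exact isObservable_iff_observabilityGramDet_ne_zero.1 h this.symm
  obtain ⟨w, hw⟩ : ∃ w, MvPolynomial.eval w Q ≠ 0 := by
    by_contra! h0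
    exact hQ (MvPolynomial.funext fun w => by simpa using h0 w)
  simp only [Q, map_mul, map_prod, MvPolynomial.eval_X, eval_gramDet] at hw
  refine ⟨pattern w, fun i j => ?_,
    isObservable_iff_observabilityGramDet_ne_zero.2 (left_ne_zero_of_mul hw)⟩
  by_cases hij : P i j
  · simpa [pattern, hij] using
      Finset.prod_ne_zero_iff.1 (right_ne_zero_of_mul hw) (i, j) (by simp [hij])
  · simp [pattern, hij]

end Matrix

section Depth

variable {V : Type*} {E : V → V → Prop} {Y : Set V}

def reachWithin (E : V → V → Prop) (Y : Set V) : ℕ → Set V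
  | 0 => Y
  | k + 1 => {i | i ∈ Y ∨ ∃ j ∈ reachWithin E Y k, E i j}

theorem exists_mem_reachWithin {i : V} (h : ∃ y ∈ Y, ReflTransGen E i y) :
    ∃ k, i ∈ reachWithin E Y k := by
  obtain ⟨y, hy, hiy⟩ := h
  induction hiy using ReflTransGen.head_induction_on with
  | refl => exact ⟨0, hy⟩
  | head hij _ ih =>
    obtain ⟨k, hk⟩ := ih
    exact ⟨k + 1, Or.inr ⟨_, hk, hij⟩⟩

theorem exists_depth_next (hout : ∀ i, ∃ y ∈ Y, ReflTransGen E i y) :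
    ∃ (d : V → ℕ) (s : V → V), (∀ i, d i = 0 → i ∈ Y) ∧
      ∀ i, 0 < d i → E i (s i) ∧ d (s i) < d i := by
  classical
  let d i := Nat.find (exists_mem_reachWithin (hout i))
  have step : ∀ i, ∃ j, 0 < d i → E i j ∧ d j < d i := by
    intro i
    by_cases hi : 0 < d i
    · obtain ⟨k, hk⟩ := Nat.exists_eq_add_one_of_ne_zero hi.ne'
      have hmem : i ∈ reachWithin E Y (k + 1) :=
        hk ▸ Nat.find_spec (exists_mem_reachWithin (hout i))
      rcases hmem with hY | ⟨j, hj, hij⟩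
      · have : d i ≤ 0 := Nat.find_min' _ (show i ∈ reachWithin E Y 0 from hY)
        omega
      · exact ⟨j, fun _ => ⟨hij, (Nat.find_min' _ hj).trans_lt (by omega)⟩⟩
    · exact ⟨i, fun h => absurd h hi⟩
  choose s hs using step
  exact ⟨d, s, fun i hi => Nat.find_eq_zero _ |>.1 hi, hs⟩

end Depth

section Forest

variable {Q : Type*} {R : Q → Q → Prop} {D : Q → ℕ}

theorem Relation.ReflTransGen.rank_le (hR : ∀ a b, R a b → D b < D a) {a b : Q}
    (h : ReflTransGen R a b) : D b ≤ D a := by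
  induction h with
  | refl => exact le_rfl
  | tail _ hbc ih => exact (hR _ _ hbc).le.trans ih

theorem exists_source_reflTransGen [Finite Q] (hR : ∀ a b, R a b → D b < D a) {S : Set Q}
    {c : Q} (hc : c ∈ S) : ∃ a ∈ S, (∀ a' ∈ S, ¬R a' a) ∧ ReflTransGen R a c := by
  obtain ⟨a, ⟨haS, hac⟩, hmax⟩ := Set.exists_max_image {a | a ∈ S ∧ ReflTransGen R a c} D
    (Set.toFinite _) ⟨c, hc, .refl⟩
  refine ⟨a, haS, fun a' ha' ha'a => ?_, hac⟩
  exact (hR _ _ ha'a).not_ge (hmax a' ⟨ha', .head ha'a hac⟩)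

theorem eq_of_rel_of_reflTransGen (hR : ∀ a b, R a b → D b < D a) (hU : Relator.RightUnique R)
    {c₁ c₂ b : Q} (h : ReflTransGen R c₁ c₂) (h₁ : R c₁ b) (h₂ : R c₂ b) : c₁ = c₂ := by
  rcases h.cases_head with rfl | ⟨m, hm, hmc⟩
  · rfl
  · rw [hU hm h₁] at hmc
    exact absurd (hmc.rank_le hR) (hR _ _ h₂).not_ge

theorem eq_of_rel_of_source_unique [Finite Q] (hR : ∀ a b, R a b → D b < D a)
    (hU : Relator.RightUnique R) {S : Set Q}
    (hsrc : ∀ a₁ ∈ S, ∀ a₂ ∈ S, (∀ a ∈ S, ¬R a a₁) → (∀ a ∈ S, ¬R a a₂) → a₁ = a₂)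
    {c₁ c₂ b : Q} (hc₁ : c₁ ∈ S) (hc₂ : c₂ ∈ S) (h₁ : R c₁ b) (h₂ : R c₂ b) : c₁ = c₂ := by
  obtain ⟨a₁, ha₁, hsrc₁, hac₁⟩ := exists_source_reflTransGen hR hc₁
  obtain ⟨a₂, ha₂, hsrc₂, hac₂⟩ := exists_source_reflTransGen hR hc₂
  rw [hsrc a₁ ha₁ a₂ ha₂ hsrc₁ hsrc₂] at hac₁
  rcases hac₁.total_of_right_unique hU hac₂ with h | h
  · exact eq_of_rel_of_reflTransGen hR hU h h₁ h₂
  · exact (eq_of_rel_of_reflTransGen hR hU h h₂ h₁).symm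

end Forest

namespace Equiv.Perm

variable {V K : Type*} [Field K] {σ : Perm V} {v : V → K} {μ r : K}

theorem pow_mul_apply_pow {x : V} (h : ∀ y, σ.SameCycle x y → μ * v (σ y) = r * v y) (m : ℕ) :
    μ ^ m * v ((σ ^ m) x) = r ^ m * v x := by
  induction m with
  | zero => simp
  | succ m ih =>
    calc μ ^ (m + 1) * v ((σ ^ (m + 1)) x) = μ ^ m * (μ * v (σ ((σ ^ m) x))) := by
          rw [pow_succ' σ, mul_apply]; ring
      _ = r * (μ ^ m * v ((σ ^ m) x)) := by
          rw [h _ (sameCycle_pow_right.2 (.refl _ _))]; ring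
      _ = r ^ (m + 1) * v x := by rw [ih]; ring

theorem pow_orderOf_eq_of_mul_apply {x : V} (h : ∀ y, σ.SameCycle x y → μ * v (σ y) = r * v y)
    (hx : v x ≠ 0) : μ ^ orderOf σ = r ^ orderOf σ := by
  have := pow_mul_apply_pow h (orderOf σ)
  rw [pow_orderOf_eq_one, one_apply] at this
  exact mul_right_cancel₀ hx this

theorem apply_pow_eq_zero_iff (hμ : μ ≠ 0) (hr : r ≠ 0) {z : V}
    (h : ∀ y, σ.SameCycle z y → σ y ≠ z → μ * v (σ y) = r * v y) (m : ℕ) :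
    v ((σ ^ m) z) = 0 ↔ v z = 0 := by
  induction m with
  | zero => simp
  | succ m ih =>
    rw [← ih, pow_succ', mul_apply]
    by_cases hz : σ ((σ ^ m) z) = z
    · rw [hz, ← ih]
    · rw [← mul_eq_zero_iff_left hμ, h _ (sameCycle_pow_right.2 (.refl _ _)) hz,
        mul_eq_zero_iff_left hr]

theorem apply_ne_zero_of_sameCycle [Finite V] (hμ : μ ≠ 0) (hr : r ≠ 0) {z x y : V}
    (h : ∀ y, σ.SameCycle z y → σ y ≠ z → μ * v (σ y) = r * v y)
    (hx : σ.SameCycle z x) (hvx : v x ≠ 0) (hy : σ.SameCycle z y) : v y ≠ 0 := by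
  obtain ⟨m, -, rfl⟩ := hx.exists_pow_eq'
  obtain ⟨n, -, rfl⟩ := hy.exists_pow_eq'
  rw [Ne, apply_pow_eq_zero_iff hμ hr h] at hvx ⊢
  exact hvx

end Equiv.Perm

noncomputable section

structure RankedPerm (V : Type*) where
  σ : Perm V
  depth : V → ℕ
  next : V → V
  depth_next_lt : ∀ i, 0 < depth i → depth (next i) < depth i

namespace RankedPerm

variable {V : Type*} (F : RankedPerm V)

abbrev Block : Type _ := Quotient (Perm.SameCycle.setoid F.σ)

def block (x : V) : F.Block := Quotient.mk _ x

theorem block_eq_block_iff {x y : V} : F.block x = F.block y ↔ F.σ.SameCycle x y := Quotient.eq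

theorem block_apply (x : V) : F.block (F.σ x) = F.block x :=
  F.block_eq_block_iff.2 (Perm.sameCycle_apply_left.2 (.refl _ _))

def rep (c : F.Block) : V :=
  Function.argminOn F.depth {x | F.block x = c} (Quotient.exists_rep c)

theorem block_rep (c : F.Block) : F.block (F.rep c) = c :=
  Function.argminOn_mem F.depth {x | F.block x = c} _

theorem depth_rep_le {c : F.Block} {x : V} (hx : F.block x = c) :
    F.depth (F.rep c) ≤ F.depth x :=
  Function.argminOn_le F.depth {x | F.block x = c} hx

def parent (c : F.Block) : F.Block := F.block (F.next (F.rep c))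

def Feeds (c b : F.Block) : Prop := 0 < F.depth (F.rep c) ∧ F.parent c = b

theorem depth_rep_lt_of_feeds {c b : F.Block} (h : F.Feeds c b) :
    F.depth (F.rep b) < F.depth (F.rep c) :=
  (F.depth_rep_le h.2).trans_lt (F.depth_next_lt _ h.1)

theorem rightUnique_feeds : Relator.RightUnique F.Feeds := fun _ _ _ h₁ h₂ => h₁.2.symm.trans h₂.2

def IsExit (i : V) : Prop := F.rep (F.block i) = i ∧ 0 < F.depth i

theorem feeds_of_isExit {i : V} (hi : F.IsExit i) : F.Feeds (F.block i) (F.block (F.next i)) := by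
  refine ⟨?_, ?_⟩
  · rw [hi.1]
    exact hi.2
  · rw [parent, hi.1]

theorem isExit_rep {c : F.Block} (hc : 0 < F.depth (F.rep c)) : F.IsExit (F.rep c) :=
  ⟨by rw [block_rep], hc⟩

variable [Fintype V]

def weight (c : F.Block) : ℕ := Finite.equivFin F.Block c + 1

theorem weight_injective : Function.Injective F.weight := fun _ _ h =>
  (Finite.equivFin F.Block).injective (Fin.ext (Nat.succ_injective h))

open Classical in
def matrix (K : Type*) [Semiring K] : Matrix V V K := Matrix.of fun j i =>
  (if j = F.σ i then (F.weight (F.block i) : K) else 0) +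
    (if F.IsExit i ∧ F.next i = j then 1 else 0)

theorem matrix_apply_ne_zero {K : Type*} [Semiring K] {E : V → V → Prop}
    (hσ : ∀ i, E i (F.σ i)) (hnext : ∀ i, 0 < F.depth i → E i (F.next i)) {i j : V}
    (h : F.matrix K j i ≠ 0) : E i j := by
  by_contra hE
  refine h ?_
  have h₁ : j ≠ F.σ i := fun hj => hE (hj ▸ hσ i)
  have h₂ : ¬(F.IsExit i ∧ F.next i = j) := fun hi => hE (hi.2 ▸ hnext i hi.1.2)
  simp [matrix, h₁, h₂]

theorem matrix_map {R S : Type*} [Semiring R] [Semiring S] (f : R →+* S) :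
    (F.matrix R).map f = F.matrix S := by
  ext j i
  simp [matrix, apply_ite f]

variable {K : Type*} [Field K]

open Classical in
theorem matrix_mulVec_apply (v : V → K) (y : V) :
    (F.matrix K *ᵥ v) (F.σ y) =
      F.weight (F.block y) * v y + ∑ i with F.IsExit i ∧ F.next i = F.σ y, v i := by
  simp only [Matrix.mulVec, dotProduct, matrix, Matrix.of_apply, add_mul, ite_mul, one_mul,
    zero_mul, Finset.sum_add_distrib, F.σ.injective.eq_iff, Finset.sum_ite_eq, Finset.mem_univ,
    if_true, Finset.sum_filter]

variable {v : V → K} {μ : K}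

theorem mul_apply_perm_of_forall_exit (hv : F.matrix K *ᵥ v = μ • v) {y : V}
    (h : ∀ i, F.IsExit i → F.next i = F.σ y → v i = 0) :
    μ * v (F.σ y) = F.weight (F.block y) * v y := by
  classical
  have hrow := congrFun hv (F.σ y)
  rw [matrix_mulVec_apply, Finset.sum_eq_zero fun i hi => h i (Finset.mem_filter.1 hi).2.1
    (Finset.mem_filter.1 hi).2.2, add_zero] at hrow
  simpa using hrow.symm

theorem mul_apply_perm_of_source (hv : F.matrix K *ᵥ v = μ • v) {b : F.Block}
    (hb : ∀ c ∈ F.block '' support v, ¬F.Feeds c b) {y : V} (hy : F.block y = b) :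
    μ * v (F.σ y) = F.weight b * v y := by
  rw [← hy]
  refine F.mul_apply_perm_of_forall_exit hv fun i hi hiy => ?_
  by_contra hvi
  have hfeeds := F.feeds_of_isExit hi
  rw [hiy, block_apply, hy] at hfeeds
  exact hb _ ⟨i, hvi, rfl⟩ hfeeds

theorem pow_orderOf_eq_weight_of_source (hv : F.matrix K *ᵥ v = μ • v) {b : F.Block}
    (hbS : b ∈ F.block '' support v) (hb : ∀ c ∈ F.block '' support v, ¬F.Feeds c b) :
    μ ^ orderOf F.σ = (F.weight b : K) ^ orderOf F.σ := by
  obtain ⟨x, hx, rfl⟩ := hbS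
  exact Perm.pow_orderOf_eq_of_mul_apply
    (fun y hxy => F.mul_apply_perm_of_source hv hb (F.block_eq_block_iff.2 hxy).symm) hx

variable [CharZero K]

theorem weight_cast_ne_zero (c : F.Block) : (F.weight c : K) ≠ 0 :=
  Nat.cast_ne_zero.2 (Nat.succ_ne_zero _)

theorem source_unique (hv : F.matrix K *ᵥ v = μ • v) :
    ∀ a₁ ∈ F.block '' support v, ∀ a₂ ∈ F.block '' support v,
      (∀ c ∈ F.block '' support v, ¬F.Feeds c a₁) →
      (∀ c ∈ F.block '' support v, ¬F.Feeds c a₂) → a₁ = a₂ := by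
  intro a₁ h₁ a₂ h₂ hs₁ hs₂
  have := (F.pow_orderOf_eq_weight_of_source hv h₁ hs₁).symm.trans
    (F.pow_orderOf_eq_weight_of_source hv h₂ hs₂)
  exact F.weight_injective (Nat.pow_left_injective (orderOf_pos F.σ).ne' (by exact_mod_cast this))

theorem eq_of_feeds (hv : F.matrix K *ᵥ v = μ • v) {c₁ c₂ b : F.Block}
    (hc₁ : c₁ ∈ F.block '' support v) (hc₂ : c₂ ∈ F.block '' support v)
    (h₁ : F.Feeds c₁ b) (h₂ : F.Feeds c₂ b) : c₁ = c₂ :=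
  eq_of_rel_of_source_unique (fun _ _ h => F.depth_rep_lt_of_feeds h) F.rightUnique_feeds
    (F.source_unique hv) hc₁ hc₂ h₁ h₂

theorem eigenvalue_ne_zero (hv : F.matrix K *ᵥ v = μ • v) {x : V} (hx : v x ≠ 0) : μ ≠ 0 := by
  obtain ⟨a, ha, hsrc, -⟩ := exists_source_reflTransGen (fun _ _ h => F.depth_rep_lt_of_feeds h)
    (show F.block x ∈ F.block '' support v from ⟨x, hx, rfl⟩)
  have := F.pow_orderOf_eq_weight_of_source hv ha hsrc
  rintro rfl
  rw [zero_pow (orderOf_pos _).ne'] at this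
  exact pow_ne_zero _ (F.weight_cast_ne_zero a) this.symm

theorem apply_ne_zero_of_mem (hv : F.matrix K *ᵥ v = μ • v) {b : F.Block}
    (hb : b ∈ F.block '' support v) {x : V} (hx : F.block x = b) : v x ≠ 0 := by
  obtain ⟨x₀, hx₀, rfl⟩ := hb
  obtain ⟨z, hz, hzeq⟩ : ∃ z, F.block z = F.block x₀ ∧ ∀ y, F.block y = F.block x₀ →
      F.σ y ≠ z → μ * v (F.σ y) = F.weight (F.block x₀) * v y := by
    -- `z` is the only node of the cycle that can receive input from another cycle of the support
    by_cases hfeed : ∃ c ∈ F.block '' support v, F.Feeds c (F.block x₀)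
    · obtain ⟨c, hc, hcb⟩ := hfeed
      refine ⟨F.next (F.rep c), hcb.2, fun y hy hyz => ?_⟩
      rw [← hy]
      refine F.mul_apply_perm_of_forall_exit hv fun i hi hiy => ?_
      by_contra hvi
      have hfeeds := F.feeds_of_isExit hi
      rw [hiy, block_apply, hy] at hfeeds
      have hic : F.block i = c := F.eq_of_feeds hv ⟨i, hvi, rfl⟩ hc hfeeds hcb
      exact hyz (by rw [← hiy, ← hi.1, hic])
    · simp only [not_exists, not_and] at hfeed
      exact ⟨x₀, rfl, fun y hy _ => F.mul_apply_perm_of_source hv hfeed hy⟩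
  have hcyc : ∀ {y}, F.block y = F.block x₀ → F.σ.SameCycle z y :=
    fun hy => F.block_eq_block_iff.1 (hz.trans hy.symm)
  exact Perm.apply_ne_zero_of_sameCycle (F.eigenvalue_ne_zero hv hx₀) (F.weight_cast_ne_zero _)
    (fun y hzy => hzeq y ((F.block_eq_block_iff.2 hzy).symm.trans hz)) (hcyc rfl) hx₀ (hcyc hx)

theorem parent_mem (hv : F.matrix K *ᵥ v = μ • v) {b : F.Block}
    (hb : b ∈ F.block '' support v) (hd : 0 < F.depth (F.rep b)) :
    F.parent b ∈ F.block '' support v := by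
  classical
  by_contra hp
  have hzero : ∀ x, F.block x = F.parent b → v x = 0 :=
    fun x hx => by_contra fun hvx => hp ⟨x, hvx, hx⟩
  set y := F.σ.symm (F.next (F.rep b))
  have hy : F.σ y = F.next (F.rep b) := F.σ.apply_symm_apply _
  have hrow := congrFun hv (F.σ y)
  rw [F.matrix_mulVec_apply, Finset.sum_eq_single (F.rep b)] at hrow
  · have h₁ : v (F.σ y) = 0 := hzero _ (by rw [hy]; rfl)
    have h₂ : v y = 0 := hzero _ (by rw [← F.block_apply, hy]; rfl)
    simp only [h₁, h₂, mul_zero, zero_add, Pi.smul_apply, smul_eq_mul] at hrow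
    exact F.apply_ne_zero_of_mem hv hb (F.block_rep b) hrow
  · intro i hi hib
    obtain ⟨hiExit, hiy⟩ := (Finset.mem_filter.1 hi).2
    by_contra hvi
    have hfeeds := F.feeds_of_isExit hiExit
    rw [hiy, hy] at hfeeds
    have hib' := F.eq_of_feeds hv ⟨i, hvi, rfl⟩ hb hfeeds ⟨hd, rfl⟩
    exact hib (by rw [← hiExit.1, hib'])
  · intro hnot
    exact absurd (Finset.mem_filter.2 ⟨Finset.mem_univ _, F.isExit_rep hd, hy.symm⟩) hnot

theorem eq_zero_of_mulVec_eq_smul (hv : F.matrix K *ᵥ v = μ • v)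
    (hY : ∀ x, F.depth x = 0 → v x = 0) : v = 0 := by
  by_contra hv0
  obtain ⟨x, hx⟩ : ∃ x, v x ≠ 0 := by
    by_contra! h
    exact hv0 (funext h)
  obtain ⟨b, hb, hmin⟩ := Set.exists_min_image (F.block '' support v) (fun b => F.depth (F.rep b))
    (Set.toFinite _) ⟨_, x, hx, rfl⟩
  rcases Nat.eq_zero_or_pos (F.depth (F.rep b)) with hd | hd
  · exact F.apply_ne_zero_of_mem hv hb (F.block_rep b) (hY _ hd)
  · exact (F.depth_rep_lt_of_feeds ⟨hd, rfl⟩).not_ge (hmin _ (F.parent_mem hv hb hd))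

theorem isObservable_matrix [DecidableEq V] {Y : Set V} (hY : ∀ i, F.depth i = 0 → i ∈ Y) :
    (F.matrix ℝ).IsObservable
      (Matrix.of fun (y : Y) (j : V) => if (y : V) = j then (1 : ℝ) else 0) := by
  refine Matrix.IsObservable.of_map (f := Complex.ofRealHom) Complex.ofReal_injective ?_
  rw [F.matrix_map]
  refine Matrix.isObservable_of_forall_eigenvector fun v μ hv hC =>
    F.eq_zero_of_mulVec_eq_smul hv fun x hx => ?_
  simpa [Matrix.mulVec, dotProduct] using congrFun hC ⟨x, hY x hx⟩

end RankedPerm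

end

theorem cyclic_output_connected_structurally_observable_general
    (V : Type) [Fintype V] [DecidableEq V]
    (E : V → V → Prop) (Y : Set V)
    (hcyc : ∃ σ : Equiv.Perm V, ∀ i : V, E i (σ i))
    (hout : ∀ i : V, ∃ y ∈ Y, Relation.ReflTransGen E i y) :
    ∃ A : Matrix V V ℝ,
      (∀ i j : V, A i j ≠ 0 ↔ E j i) ∧
      (∀ x : V → ℝ,
        (∀ k : ℕ,
          (Matrix.of fun (y : Y) (j : V) => if (y : V) = j then (1 : ℝ) else 0).mulVec
            ((A ^ k).mulVec x) = 0) → x = 0) := by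
  obtain ⟨σ, hσ⟩ := hcyc
  obtain ⟨d, s, hdY, hs⟩ := exists_depth_next hout
  let F : RankedPerm V := ⟨σ, d, s, fun i hi => (hs i hi).2⟩
  have : Fintype Y := Fintype.ofFinite Y
  exact Matrix.exists_isObservable_of_support_subset
    (fun _ _ => F.matrix_apply_ne_zero hσ fun i hi => (hs i hi).1) (F.isObservable_matrix hdY)

/-- Sufficiency direction of Theorem 1: a cyclic, output-connected system digraph
is structurally observable: there is a realization `A` of the digraph pattern such
that the pair `(A, C_Y)` is observable. -/
theorem cyclic_output_connected_structurally_observable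
    (V : Type) [Fintype V] [Nonempty V] [DecidableEq V]
    (E : V → V → Prop) (Y : Set V)
    (hcyc : ∃ σ : Equiv.Perm V, ∀ i : V, E i (σ i))
    (hout : ∀ i : V, ∃ y ∈ Y, Relation.ReflTransGen E i y) :
    ∃ A : Matrix V V ℝ,
      (∀ i j : V, A i j ≠ 0 ↔ E j i) ∧
      (∀ x : V → ℝ,
        (∀ k : ℕ,
          (Matrix.of fun (y : Y) (j : V) => if (y : V) = j then (1 : ℝ) else 0).mulVec
            ((A ^ k).mulVec x) = 0) → x = 0) :=
  cyclic_output_connected_structurally_observable_general V E Y hcyc hout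
end

section
/- Let V be a finite type, let E : V → V → Prop be a directed graph, and let Y : Set V be a set of output nodes. Suppose there is a node i₀ : V that is not output-connected, i.e., there is no y ∈ Y with Relation.ReflTransGen E i₀ y. Then for every matrix A : Matrix V V ℝ compatible with the digraph pattern, i.e., satisfying A i j ≠ 0 → E j i for all i j, the pair (A, C_Y) is not observable, where C_Y : Matrix Y V ℝ is defined by C_Y y j = if (y : V) = j then 1 else 0: there exists x : V → ℝ with x ≠ 0 and C_Y.mulVec ((A ^ k).mulVec x) = 0 for all k : ℕ. (Necessity direction of Theorem 1: without output-connectivity no realization is observable.) -/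
/-- Necessity direction of Theorem 1: if some node is not output-connected, then no
matrix compatible with the digraph pattern yields an observable pair `(A, C_Y)`. -/
theorem not_output_connected_not_observable
    (V : Type) [Fintype V] [DecidableEq V]
    (E : V → V → Prop) (Y : Set V) (i₀ : V)
    (hdisc : ¬ ∃ y ∈ Y, Relation.ReflTransGen E i₀ y)
    (A : Matrix V V ℝ)
    (hA : ∀ i j : V, A i j ≠ 0 → E j i) :
    ∃ x : V → ℝ, x ≠ 0 ∧
      ∀ k : ℕ,
        (Matrix.of fun (y : Y) (j : V) => if (y : V) = j then (1 : ℝ) else 0).mulVec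
          ((A ^ k).mulVec x) = 0 := by
  -- key lemma: nonzero entries of A^k give reachability
  have key : ∀ k : ℕ, ∀ u v : V, (A ^ k) u v ≠ 0 → Relation.ReflTransGen E v u := by
    intro k
    induction k with
    | zero =>
        intro u v h
        simp [Matrix.one_apply] at h
        exact h ▸ Relation.ReflTransGen.refl
    | succ n ih =>
        intro u v h
        rw [pow_succ, Matrix.mul_apply] at h
        obtain ⟨w, hw⟩ := Finset.exists_ne_zero_of_sum_ne_zero h
        have h1 : (A ^ n) u w ≠ 0 := fun hz => hw.2 (by simp [hz])
        have h2 : A w v ≠ 0 := fun hz => hw.2 (by simp [hz])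
        exact Relation.ReflTransGen.head (hA w v h2) (ih u w h1)
  refine ⟨fun j => if j = i₀ then 1 else 0, ?_, ?_⟩
  · intro h
    have := congrFun h i₀
    simp at this
  · intro k
    funext y
    have hinner : (A ^ k).mulVec (fun j => if j = i₀ then (1:ℝ) else 0)
        = fun j => (A ^ k) j i₀ := by
      funext j
      simp [Matrix.mulVec, dotProduct, mul_ite]
    rw [hinner]
    simp only [Matrix.mulVec, dotProduct, Matrix.of_apply, Pi.zero_apply]
    apply Finset.sum_eq_zero
    intro j _
    by_cases hyj : (y : V) = j
    · by_cases hz : (A ^ k) j i₀ = 0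
      · simp [hz]
      · exact absurd (hyj ▸ key k j i₀ hz)
          (fun hr => hdisc ⟨y, y.2, hr⟩)
    · simp [hyj]
end

section
/- Let V be a finite type, let E : V → V → Prop be a directed graph, and let Y : Set V be a set of output nodes. Then every node is output-connected (for every u : V there exists y ∈ Y with Relation.ReflTransGen E u y) if and only if every parent strongly-connected component contains an output node, i.e., for every u : V whose SCC is a parent SCC (meaning: for all a b : V, if u and a are mutually reachable and E a b holds, then u and b are mutually reachable), there exists y ∈ Y that is mutually reachable with u. (Theorem 2: for a cyclic system digraph, structural observability holds if and only if at least one state node of every parent SCC is measured.) -/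
/-- Theorem 2: every node is output-connected iff every parent SCC contains an
output node. -/
theorem output_connected_iff_parent_SCC_measured
    (V : Type) [Fintype V] (E : V → V → Prop) (Y : Set V) :
    (∀ u : V, ∃ y ∈ Y, Relation.ReflTransGen E u y) ↔
    (∀ u : V,
      (∀ a b : V,
        (Relation.ReflTransGen E u a ∧ Relation.ReflTransGen E a u) → E a b →
        (Relation.ReflTransGen E u b ∧ Relation.ReflTransGen E b u)) →
      ∃ y ∈ Y, Relation.ReflTransGen E u y ∧ Relation.ReflTransGen E y u) := by
  classical
  constructor
  · intro h u hparent
    obtain ⟨y, hy, hr⟩ := h u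
    refine ⟨y, hy, hr, ?_⟩
    clear hy
    induction hr with
    | refl => exact Relation.ReflTransGen.refl
    | tail hc hab ih => exact (hparent _ _ ⟨hc, ih⟩ hab).2
  · intro h u
    set f : V → ℕ := fun v =>
      (Finset.univ.filter fun w => Relation.ReflTransGen E v w).card with hf
    obtain ⟨v, hv, hmin⟩ := Finset.exists_min_image
      (Finset.univ.filter fun v => Relation.ReflTransGen E u v) f
      ⟨u, Finset.mem_filter.mpr ⟨Finset.mem_univ _, Relation.ReflTransGen.refl⟩⟩
    simp only [Finset.mem_filter, Finset.mem_univ, true_and] at hv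
    have hparent : ∀ a b : V,
        (Relation.ReflTransGen E v a ∧ Relation.ReflTransGen E a v) → E a b →
        (Relation.ReflTransGen E v b ∧ Relation.ReflTransGen E b v) := by
      rintro a b ⟨hva, hav⟩ hab
      have hvb : Relation.ReflTransGen E v b := hva.tail hab
      refine ⟨hvb, ?_⟩
      by_contra hbv
      have hsub : (Finset.univ.filter fun w => Relation.ReflTransGen E b w) ⊂
          (Finset.univ.filter fun w => Relation.ReflTransGen E v w) := by
        constructor
        · intro w hw
          simp only [Finset.mem_filter, Finset.mem_univ, true_and] at hw ⊢
          exact hvb.trans hw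
        · intro hcon
          have := hcon (Finset.mem_filter.mpr ⟨Finset.mem_univ _, Relation.ReflTransGen.refl⟩)
          simp only [Finset.mem_filter, Finset.mem_univ, true_and] at this
          exact hbv this
      have hlt : f b < f v := Finset.card_lt_card hsub
      have hle : f v ≤ f b := hmin b (by
        simp only [Finset.mem_filter, Finset.mem_univ, true_and]
        exact hv.trans hvb)
      omega
    obtain ⟨y, hy, hvy, _⟩ := h v hparent
    exact ⟨y, hy, hv.trans hvy⟩
end

section
/- Let n ≥ 1 and let r_W : Fin n → Fin n → Prop be the communication digraph of the CAVs; assume r_W is strongly connected (for all i j, Relation.ReflTransGen r_W i j) and reflexive (r_W i i for all i, modeling the nonzero diagonal of the consensus weight matrix W). Let V be a finite type of HDV state nodes and r_A : V → V → Prop a cyclic system digraph, i.e., there is a permutation σ of V with r_A u (σ u) for all u. Let M : Fin n → V → Prop encode which sensor directly measures which state, and assume global output-connectivity: for every u : V there exist v : V and s : Fin n with Relation.ReflTransGen r_A u v and M s v. Define the Kronecker product digraph R on Fin n × V by R (i, u) (j, v) ↔ r_W i j ∧ r_A u v, and call (j, w) an output node of the product if there exists s : Fin n with r_W s j and M s w.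 Then every node of the product digraph reaches an output node: for all i : Fin n and u : V there exist j : Fin n and w : V with Relation.ReflTransGen R (i, u) (j, w), and s : Fin n with r_W s j and M s w. (Graph-theoretic core of Theorem 3: strong connectivity of the CAV network together with output-connectivity of the system digraph yields distributed observability of (W ⊗ A, D_C).) -/
/-- Graph-theoretic core of Theorem 3: strong connectivity of the CAV network
together with output-connectivity of the cyclic system digraph yields
output-connectivity of every node of the Kronecker product digraph. -/
theorem kronecker_product_output_connected
    (n : ℕ) (hn : 1 ≤ n) (rW : Fin n → Fin n → Prop)
    (hSC : ∀ i j : Fin n, Relation.ReflTransGen rW i j)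
    (hrefl : ∀ i : Fin n, rW i i)
    (V : Type) [Fintype V] (rA : V → V → Prop)
    (hcyc : ∃ σ : Equiv.Perm V, ∀ u : V, rA u (σ u))
    (M : Fin n → V → Prop)
    (hout : ∀ u : V, ∃ (v : V) (s : Fin n), Relation.ReflTransGen rA u v ∧ M s v) :
    ∀ (i : Fin n) (u : V), ∃ (j : Fin n) (w : V),
      Relation.ReflTransGen
        (fun p q : Fin n × V => rW p.1 q.1 ∧ rA p.2 q.2) (i, u) (j, w) ∧
      ∃ s : Fin n, rW s j ∧ M s w := by
  obtain ⟨σ, hσ⟩ := hcyc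
  intro i u
  obtain ⟨v, s, hpath, hM⟩ := hout u
  refine ⟨s, v, ?_, s, hrefl s, hM⟩
  clear hM
  set R := fun p q : Fin n × V => rW p.1 q.1 ∧ rA p.2 q.2 with hR
  have h1 : Relation.ReflTransGen R (i, u) (i, v) := by
    induction hpath with
    | refl => exact .refl
    | tail _ h2 ih => exact ih.tail ⟨hrefl i, h2⟩
  have h2 : ∃ k : ℕ, Relation.ReflTransGen R (i, v) (s, (σ ^ k) v) := by
    have hp := hSC i s
    induction hp with
    | refl => exact ⟨0, by simpa using (Relation.ReflTransGen.refl)⟩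
    | tail _ hbc ih =>
        obtain ⟨k, hk⟩ := ih
        refine ⟨k + 1, hk.tail ⟨hbc, ?_⟩⟩
        simpa [pow_succ', Equiv.Perm.mul_apply] using hσ ((σ ^ k) v)
  obtain ⟨k, hk⟩ := h2
  have pad : ∀ m, Relation.ReflTransGen R (s, (σ ^ k) v) (s, (σ ^ (k + m)) v) := by
    intro m
    induction m with
    | zero => exact .refl
    | succ m ih =>
        refine ih.tail ⟨hrefl s, ?_⟩
        have : (σ ^ (k + (m + 1))) v = σ ((σ ^ (k + m)) v) := by
          rw [show k + (m + 1) = (k + m) + 1 by ring, pow_succ', Equiv.Perm.mul_apply]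
        rw [this]
        exact hσ _
  set N := orderOf σ with hNdef
  have hN : 0 < N := orderOf_pos σ
  have hm : k ≤ N * (k + 1) := by nlinarith
  have key : (σ ^ (N * (k + 1))) v = v := by
    rw [pow_mul, pow_orderOf_eq_one, one_pow]; rfl
  have h3 := hk.trans (pad (N * (k + 1) - k))
  rw [Nat.add_sub_cancel' hm, key] at h3
  exact h1.trans h3
end

section
/- Let n ≥ 1 and let r_W : Fin n → Fin n → Prop be strongly connected (for all i j, Relation.ReflTransGen r_W i j) and reflexive (r_W i i for all i). Let V be a type and r_A : V → V → Prop a reflexive relation (r_A u u for all u, modeling a self-damped system with self-loops at all state nodes). Let u₀ : V and suppose the SCC of u₀ under r_A is a parent SCC: for all a b : V, if u₀ and a are mutually r_A-reachable and r_A a b, then u₀ and b are mutually r_A-reachable. Define the Kronecker product digraph R on Fin n × V by R (i, u) (j, v) ↔ r_W i j ∧ r_A u v. Then the set P = { (i, u) : Fin n × V | u is mutually r_A-reachable with u₀ } is a parent SCC of R: (a) any two elements of P are mutually R-reachable, and (b) every R-edge leaving an element of P lands in P, i.e., if (i,u) ∈ P and R (i,u) (j,v) then (j,v) ∈ P. (Key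 lemma in the proof of Theorem 3: each parent SCC of the system digraph induces a giant parent SCC of the Kronecker product digraph.) -/
/-- Key lemma in the proof of Theorem 3: a parent SCC of the system digraph
induces a giant parent SCC of the Kronecker product digraph. -/
theorem parent_SCC_kronecker
    (n : ℕ) (hn : 1 ≤ n) (rW : Fin n → Fin n → Prop)
    (hSC : ∀ i j : Fin n, Relation.ReflTransGen rW i j)
    (hrefl : ∀ i : Fin n, rW i i)
    (V : Type) (rA : V → V → Prop) (hArefl : ∀ u : V, rA u u)
    (u₀ : V)
    (hparent : ∀ a b : V,
      (Relation.ReflTransGen rA u₀ a ∧ Relation.ReflTransGen rA a u₀) → rA a b →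
      (Relation.ReflTransGen rA u₀ b ∧ Relation.ReflTransGen rA b u₀)) :
    (∀ p q : Fin n × V,
      (Relation.ReflTransGen rA u₀ p.2 ∧ Relation.ReflTransGen rA p.2 u₀) →
      (Relation.ReflTransGen rA u₀ q.2 ∧ Relation.ReflTransGen rA q.2 u₀) →
      Relation.ReflTransGen (fun p q : Fin n × V => rW p.1 q.1 ∧ rA p.2 q.2) p q) ∧
    (∀ p q : Fin n × V,
      (Relation.ReflTransGen rA u₀ p.2 ∧ Relation.ReflTransGen rA p.2 u₀) →
      (rW p.1 q.1 ∧ rA p.2 q.2) →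
      (Relation.ReflTransGen rA u₀ q.2 ∧ Relation.ReflTransGen rA q.2 u₀)) := by
  set R := fun p q : Fin n × V => rW p.1 q.1 ∧ rA p.2 q.2 with hR
  have liftA : ∀ (i : Fin n) (u v : V), Relation.ReflTransGen rA u v →
      Relation.ReflTransGen R (i, u) (i, v) := by
    intro i u v h
    induction h with
    | refl => exact Relation.ReflTransGen.refl
    | tail _ h ih => exact ih.tail ⟨hrefl i, h⟩
  have liftW : ∀ (i j : Fin n) (u : V), Relation.ReflTransGen rW i j →
      Relation.ReflTransGen R (i, u) (j, u) := by
    intro i j u h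
    induction h with
    | refl => exact Relation.ReflTransGen.refl
    | tail _ h ih => exact ih.tail ⟨h, hArefl u⟩
  constructor
  · rintro ⟨i, u⟩ ⟨j, v⟩ ⟨hu1, hu2⟩ ⟨hv1, hv2⟩
    exact ((liftA i u v (hu2.trans hv1)).trans (liftW i j v (hSC i j)))
  · rintro ⟨i, u⟩ ⟨j, v⟩ hu ⟨_, huv⟩
    exact hparent u v hu huv
end

section
/- (Menger's theorem, link version.) Let G be a simple graph on a finite vertex type V and let u v : V be distinct vertices. For every k : ℕ, the following are equivalent: (i) there exist k paths from u to v in G that are pairwise edge-disjoint (no two of them use a common edge of G); (ii) every set F of edges of G such that u and v are not connected in the graph obtained from G by deleting the edges in F satisfies k ≤ |F|. In particular, the maximum number of pairwise edge-disjoint u–v paths equals the minimum number of links whose removal disconnects u from v. -/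
/-!
Unit-capacity max-flow/min-cut. Each of `k` edge-disjoint `u`–`v` paths meets every
disconnecting edge set in its own edge. Conversely, integral flows with capacity one on each edge
are augmented along residual paths. While the value is below `k` such a path exists: otherwise
the saturated edges leaving the set of residually reachable vertices disconnect `u` from `v`
and there are only as many of them as the value. A flow of value `k` then splits into `k`
edge-disjoint paths: peel off a path carrying flow; what remains is a flow of value one less
that vanishes on the edges of that path.
-/

theorem Pairwise.fin_cons {α : Type*} {r : α → α → Prop} (hr : ∀ a b, r a b → r b a)
    {n : ℕ} {a : α} {P : Fin n → α} (hP : Pairwise (Function.onFun r P)) (ha : ∀ i, r a (P i)) :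
    Pairwise (Function.onFun r (Fin.cons a P : Fin (n + 1) → α)) := by
  intro i j hij
  cases i using Fin.cases <;> cases j using Fin.cases <;>
    simp only [Function.onFun, Fin.cons_zero, Fin.cons_succ]
  · exact absurd rfl hij
  · exact ha _
  · exact hr _ _ (ha _)
  · exact hP fun h => hij (congrArg Fin.succ h)

namespace SimpleGraph

variable {V : Type*} {G : SimpleGraph V}

theorem exists_path_or_exists_cut [Fintype V] (R : V → V → Prop) (s t : V) :
    (∃ p : G.Walk s t, p.IsPath ∧ ∀ d ∈ p.darts, R d.fst d.snd) ∨
      ∃ A : Finset V, s ∈ A ∧ t ∉ A ∧ ∀ a ∈ A, ∀ b ∉ A, G.Adj a b → ¬R a b := by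
  classical
  by_cases h : ∃ p : G.Walk s t, ∀ d ∈ p.darts, R d.fst d.snd
  · obtain ⟨p, hp⟩ := h
    exact .inl ⟨p.toPath, p.toPath.2, fun d hd => hp d (Walk.darts_toPath_subset_darts p hd)⟩
  · refine .inr ⟨Finset.univ.filter fun x => ∃ p : G.Walk s x, ∀ d ∈ p.darts, R d.fst d.snd,
      ?_, ?_, ?_⟩
    · simp only [Finset.mem_filter, Finset.mem_univ, true_and]
      exact ⟨.nil, by simp⟩
    · simpa using h
    · simp only [Finset.mem_filter, Finset.mem_univ, true_and]
      rintro a ⟨p, hp⟩ b hb hab hR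
      refine hb ⟨p.concat hab, fun d hd => ?_⟩
      rw [Walk.darts_concat, List.concat_eq_append, List.mem_append, List.mem_singleton] at hd
      rcases hd with hd | rfl
      exacts [hp d hd, hR]

theorem not_reachable_deleteEdges_of_boundary_subset {F : Set (Sym2 V)} {A : Set V} {s t : V}
    (hs : s ∈ A) (ht : t ∉ A) (hF : ∀ a ∈ A, ∀ b ∉ A, G.Adj a b → s(a, b) ∈ F) :
    ¬(G.deleteEdges F).Reachable s t := by
  rintro ⟨p⟩
  obtain ⟨d, -, hdA, hdB⟩ := p.exists_boundary_dart A hs ht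
  have hadj := d.adj
  rw [deleteEdges_adj] at hadj
  exact hadj.2 (hF _ hdA _ hdB hadj.1)

theorem exists_mem_edges_of_not_reachable_deleteEdges {F : Set (Sym2 V)} {s t : V}
    (p : G.Walk s t) (h : ¬(G.deleteEdges F).Reachable s t) : ∃ e ∈ p.edges, e ∈ F := by
  by_contra! hp
  exact h ⟨p.toDeleteEdges F hp⟩

theorem card_le_ncard_of_not_reachable_deleteEdges [Finite V] {ι : Type*} [Fintype ι] {s t : V}
    (P : ι → G.Walk s t)
    (hP : Pairwise fun i j => (P i).edges.Disjoint (P j).edges) {F : Set (Sym2 V)}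
    (hF : ¬(G.deleteEdges F).Reachable s t) : Fintype.card ι ≤ F.ncard := by
  choose e he heF using fun i => exists_mem_edges_of_not_reachable_deleteEdges (P i) hF
  have hinj : Function.Injective fun i => (⟨e i, heF i⟩ : F) := by
    intro i j hij
    by_contra hne
    rw [Subtype.mk.injEq] at hij
    exact hP hne (he i) (hij ▸ he j)
  simpa [Nat.card_coe_set_eq] using Nat.card_le_card_of_injective _ hinj

namespace Walk

theorem map_uncurry_mk_map_toProd {x y : V} (p : G.Walk x y) :
    (p.darts.map Dart.toProd).map (Function.uncurry Sym2.mk) = p.edges := by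
  rw [List.map_map]; rfl

theorem IsTrail.nodup_map_toProd {x y : V} {p : G.Walk x y} (hp : p.IsTrail) :
    (p.darts.map Dart.toProd).Nodup :=
  List.Nodup.of_map _ (p.map_uncurry_mk_map_toProd ▸ hp.edges_nodup)

variable [DecidableEq V]

def flow {x y : V} (p : G.Walk x y) (a b : V) : ℤ :=
  (p.darts.map Dart.toProd).count (a, b) - (p.darts.map Dart.toProd).count (b, a)

variable {x y : V} (p : G.Walk x y)

theorem flow_swap (a b : V) : p.flow b a = -p.flow a b := by
  simp only [flow]; ring

theorem flow_reverse (a b : V) : p.reverse.flow a b = p.flow b a := by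
  have h : ∀ c d : V, (p.reverse.darts.map Dart.toProd).count (c, d) =
      (p.darts.map Dart.toProd).count (d, c) := fun c d => by
    rw [darts_reverse, List.map_reverse, List.count_reverse, List.map_map,
      show Dart.toProd ∘ Dart.symm = Prod.swap ∘ Dart.toProd from rfl, ← List.map_map]
    exact List.count_map_of_injective _ Prod.swap Prod.swap_injective (d, c)
  simp only [flow, h]

theorem flow_cons {x' : V} (h : G.Adj x x') (p : G.Walk x' y) (a b : V) :
    (cons h p).flow a b =
      p.flow a b + (if (x, x') = (a, b) then 1 else 0) - (if (x, x') = (b, a) then 1 else 0) := by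
  simp only [flow, darts_cons, List.map_cons, List.count_cons, beq_iff_eq]
  push_cast
  ring

theorem sum_flow [Fintype V] (w : V) :
    ∑ b, p.flow w b = (if w = x then 1 else 0) - (if w = y then 1 else 0) := by
  induction p with
  | nil => simp [flow]
  | @cons x x' y hadj p ih =>
    simp only [flow_cons, Prod.mk.injEq, eq_comm (a := x), eq_comm (a := x'), ite_and,
      Finset.sum_sub_distrib, Finset.sum_add_distrib, ih, Finset.sum_ite_irrel, Finset.sum_ite_eq',
      Finset.mem_univ, ↓reduceIte, Finset.sum_const_zero]
    ring

theorem flow_eq_zero_of_notMem_edges {a b : V} (h : s(a, b) ∉ p.edges) : p.flow a b = 0 := by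
  have hc : ∀ c d : V, s(c, d) ∉ p.edges → (p.darts.map Dart.toProd).count (c, d) = 0 := by
    intro c d hcd
    rw [List.count_eq_zero, List.mem_map]
    rintro ⟨e, he, hecd⟩
    have he' : e.edge ∈ p.edges := List.mem_map_of_mem he
    rw [Dart.edge, hecd] at he'
    exact hcd he'
  rw [flow, hc a b h, hc b a (Sym2.eq_swap ▸ h)]
  rfl

theorem flow_nonpos_of_notMem {a b : V} (h : (a, b) ∉ p.darts.map Dart.toProd) :
    p.flow a b ≤ 0 := by
  simp [flow, List.count_eq_zero_of_not_mem h]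

theorem IsTrail.flow_le_one {p : G.Walk x y} (hp : p.IsTrail) (a b : V) : p.flow a b ≤ 1 := by
  have := List.nodup_iff_count_le_one.1 hp.nodup_map_toProd (a, b)
  simp only [flow]
  omega

theorem IsTrail.flow_dart {p : G.Walk x y} (hp : p.IsTrail) {d : G.Dart} (hd : d ∈ p.darts) :
    p.flow d.fst d.snd = 1 := by
  have hmem : (d.fst, d.snd) ∈ p.darts.map Dart.toProd := List.mem_map_of_mem hd
  have hswap : (d.snd, d.fst) ∉ p.darts.map Dart.toProd := fun h =>
    d.adj.ne (Prod.ext_iff.1 (List.inj_on_of_nodup_map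
      (p.map_uncurry_mk_map_toProd ▸ hp.edges_nodup) hmem h Sym2.eq_swap)).1
  simp [flow, List.count_eq_one_of_mem hp.nodup_map_toProd hmem,
    List.count_eq_zero_of_not_mem hswap]

end Walk

section Flow

variable [Fintype V]

/-- `f a b` is the net flow from `a` to `b`; each edge of `G` has capacity one either way. -/
structure IsUnitFlow (G : SimpleGraph V) (s t : V) (f : V → V → ℤ) : Prop where
  skew : ∀ a b, f b a = -f a b
  le_one : ∀ a b, f a b ≤ 1
  eq_zero_of_not_adj : ∀ a b, ¬G.Adj a b → f a b = 0
  sum_eq_zero : ∀ w, w ≠ s → w ≠ t → ∑ b, f w b = 0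

variable {s t : V} {f : V → V → ℤ}

namespace IsUnitFlow

theorem zero : IsUnitFlow G s t 0 where
  skew := by simp
  le_one := by simp
  eq_zero_of_not_adj := by simp
  sum_eq_zero := by simp

theorem symm (hf : IsUnitFlow G s t f) : IsUnitFlow G t s f :=
  ⟨hf.skew, hf.le_one, hf.eq_zero_of_not_adj, fun w hwt hws => hf.sum_eq_zero w hws hwt⟩

variable [DecidableEq V]

theorem add_flow (hf : IsUnitFlow G s t f) {p : G.Walk s t} (hp : p.IsTrail)
    (hres : ∀ d ∈ p.darts, f d.fst d.snd ≤ 0) : IsUnitFlow G s t (f + p.flow) where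
  skew a b := by simp only [Pi.add_apply, hf.skew a b, p.flow_swap a b]; ring
  le_one a b := by
    by_cases h : (a, b) ∈ p.darts.map Dart.toProd
    · obtain ⟨d, hd, hdab⟩ := List.mem_map.1 h
      obtain ⟨rfl, rfl⟩ := Prod.ext_iff.1 hdab
      have := hres d hd
      have := hp.flow_le_one d.fst d.snd
      simp only [Pi.add_apply]
      omega
    · have := hf.le_one a b
      have := p.flow_nonpos_of_notMem h
      simp only [Pi.add_apply]
      omega
  eq_zero_of_not_adj a b hab := by
    rw [Pi.add_apply, Pi.add_apply, hf.eq_zero_of_not_adj a b hab,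
      p.flow_eq_zero_of_notMem_edges fun h => hab (p.adj_of_mem_edges h), add_zero]
  sum_eq_zero w hws hwt := by
    simp [Finset.sum_add_distrib, hf.sum_eq_zero w hws hwt, p.sum_flow, hws, hwt]

theorem sum_eq_sum_compl (hf : IsUnitFlow G s t f) {A : Finset V} (hs : s ∈ A) (ht : t ∉ A) :
    ∑ b, f s b = ∑ a ∈ A, ∑ b ∈ Aᶜ, f a b := by
  have hinner : ∑ a ∈ A, ∑ b ∈ A, f a b = 0 := by
    have : ∑ a ∈ A, ∑ b ∈ A, f a b = -∑ a ∈ A, ∑ b ∈ A, f a b :=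
      calc ∑ a ∈ A, ∑ b ∈ A, f a b = ∑ b ∈ A, ∑ a ∈ A, f a b := Finset.sum_comm
        _ = ∑ b ∈ A, ∑ a ∈ A, -f b a :=
          Finset.sum_congr rfl fun b _ => Finset.sum_congr rfl fun a _ => hf.skew b a
        _ = -∑ a ∈ A, ∑ b ∈ A, f a b := by simp only [Finset.sum_neg_distrib]
    linarith
  have hsource : ∑ a ∈ A, ∑ b, f a b = ∑ b, f s b :=
    Finset.sum_eq_single_of_mem s hs fun a ha has =>
      hf.sum_eq_zero a has (ne_of_mem_of_not_mem ha ht)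
  calc ∑ b, f s b = ∑ a ∈ A, (∑ b ∈ A, f a b + ∑ b ∈ Aᶜ, f a b) := by
        simp only [Finset.sum_add_sum_compl, hsource]
    _ = ∑ a ∈ A, ∑ b ∈ Aᶜ, f a b := by rw [Finset.sum_add_distrib, hinner, zero_add]

theorem exists_succ_or_exists_cut (hf : IsUnitFlow G s t f) (hst : s ≠ t) :
    (∃ g, IsUnitFlow G s t g ∧ ∑ b, g s b = ∑ b, f s b + 1) ∨
      ∃ F ⊆ G.edgeSet, ¬(G.deleteEdges F).Reachable s t ∧ (F.ncard : ℤ) ≤ ∑ b, f s b := by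
  classical
  rcases exists_path_or_exists_cut (G := G) (fun a b => f a b ≤ 0) s t with
    ⟨p, hp, hres⟩ | ⟨A, hs, ht, hA⟩
  · exact .inl ⟨f + p.flow, hf.add_flow hp.isTrail hres,
      by simp [Finset.sum_add_distrib, p.sum_flow, hst]⟩
  right
  set C := (A ×ˢ Aᶜ).filter fun e => G.Adj e.1 e.2
  have hsat : ∀ a ∈ A, ∀ b ∈ Aᶜ, f a b = if G.Adj a b then 1 else 0 := by
    intro a ha b hb
    split_ifs with hab
    · have := hA a ha b (Finset.mem_compl.1 hb) hab
      have := hf.le_one a b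
      omega
    · exact hf.eq_zero_of_not_adj a b hab
  refine ⟨C.image (Function.uncurry Sym2.mk), ?_, ?_, ?_⟩
  · simp only [Finset.coe_image, Set.image_subset_iff]
    intro e he
    exact (Finset.mem_filter.1 he).2
  · refine not_reachable_deleteEdges_of_boundary_subset (A := A) hs ht fun a ha b hb hab => ?_
    exact Finset.mem_image_of_mem _
      (Finset.mem_filter.2 ⟨Finset.mem_product.2 ⟨ha, Finset.mem_compl.2 hb⟩, hab⟩)
  · calc ((C.image (Function.uncurry Sym2.mk) : Set (Sym2 V)).ncard : ℤ)
        ≤ C.card := by rw [Set.ncard_coe_finset]; exact_mod_cast Finset.card_image_le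
      _ = ∑ e ∈ A ×ˢ Aᶜ, if G.Adj e.1 e.2 then 1 else 0 := by rw [Finset.sum_boole]
      _ = ∑ b, f s b := by
        rw [hf.sum_eq_sum_compl hs ht, Finset.sum_product]
        exact Finset.sum_congr rfl fun a ha =>
          Finset.sum_congr rfl fun b hb => (hsat a ha b hb).symm

theorem exists_path (hf : IsUnitFlow G s t f) (hpos : 0 < ∑ b, f s b) :
    ∃ p : G.Walk s t, p.IsPath ∧ ∀ d ∈ p.darts, f d.fst d.snd = 1 := by
  rcases exists_path_or_exists_cut (G := G) (fun a b => f a b = 1) s t with h | ⟨A, hs, ht, hA⟩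
  · exact h
  refine absurd hpos (not_lt.2 ?_)
  rw [hf.sum_eq_sum_compl hs ht]
  refine Finset.sum_nonpos fun a ha => Finset.sum_nonpos fun b hb => ?_
  by_cases hab : G.Adj a b
  · have := hA a ha b (Finset.mem_compl.1 hb) hab
    have := hf.le_one a b
    omega
  · exact (hf.eq_zero_of_not_adj a b hab).le

theorem sub_flow (hf : IsUnitFlow G s t f) {q : G.Walk s t} (hq : q.IsTrail)
    (hsat : ∀ d ∈ q.darts, f d.fst d.snd = 1) : IsUnitFlow G s t (f - q.flow) := by
  have hrev : f - q.flow = f + q.reverse.flow := by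
    ext a b
    simp only [Pi.sub_apply, Pi.add_apply, q.flow_reverse, q.flow_swap a b]
    ring
  refine hrev ▸ (hf.symm.add_flow hq.reverse fun d hd => ?_).symm
  rw [Walk.darts_reverse, List.mem_reverse, List.mem_map] at hd
  obtain ⟨d, hd, rfl⟩ := hd
  have := hf.skew d.fst d.snd
  have := hsat d hd
  simp only [Dart.symm_toProd, Prod.fst_swap, Prod.snd_swap]
  omega

theorem sub_flow_eq_zero_of_mem_edges (hf : IsUnitFlow G s t f) {q : G.Walk s t} (hq : q.IsTrail)
    (hsat : ∀ d ∈ q.darts, f d.fst d.snd = 1) {a b : V} (h : s(a, b) ∈ q.edges) :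
    (f - q.flow) a b = 0 := by
  obtain ⟨d, hd, hdab⟩ := List.mem_map.1 h
  have h1 := hsat d hd
  have h2 := hq.flow_dart hd
  rw [Dart.edge, Sym2.eq_iff] at hdab
  rcases hdab with ⟨rfl, rfl⟩ | ⟨rfl, rfl⟩
  · simp [h1, h2]
  · simp [hf.skew d.fst d.snd, q.flow_swap d.fst d.snd, h1, h2]

theorem exists_pairwise_disjoint_paths (hst : s ≠ t) (n : ℕ) (hf : IsUnitFlow G s t f)
    (hn : n ≤ ∑ b, f s b) :
    ∃ P : Fin n → G.Walk s t, (∀ i, (P i).IsPath) ∧ (∀ i, ∀ d ∈ (P i).darts, f d.fst d.snd = 1) ∧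
      Pairwise fun i j => (P i).edges.Disjoint (P j).edges := by
  induction n generalizing f with
  | zero => exact ⟨Fin.elim0, fun i => i.elim0, fun i => i.elim0, fun i => i.elim0⟩
  | succ n ih =>
    obtain ⟨q, hq, hqf⟩ := hf.exists_path (by omega)
    obtain ⟨P, hP, hPf, hPdisj⟩ := ih (hf.sub_flow hq.isTrail hqf) (by
      simp only [Pi.sub_apply, Finset.sum_sub_distrib, q.sum_flow, hst]
      omega)
    have hPq : ∀ i, q.edges.Disjoint (P i).edges := by
      intro i e heq hei
      obtain ⟨d, hd, rfl⟩ := List.mem_map.1 hei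
      have := hPf i d hd
      rw [hf.sub_flow_eq_zero_of_mem_edges hq.isTrail hqf heq] at this
      exact zero_ne_one this
    refine ⟨Fin.cons q P, Fin.cases hq hP, Fin.cases hqf fun i d hd => ?_,
      Pairwise.fin_cons (r := fun p q : G.Walk s t => p.edges.Disjoint q.edges)
        (fun _ _ => List.Disjoint.symm) hPdisj hPq⟩
    have := hPf i d hd
    simp only [Pi.sub_apply] at this
    rw [q.flow_eq_zero_of_notMem_edges fun h => hPq i h (List.mem_map_of_mem hd),
      sub_zero] at this
    exact this

end IsUnitFlow

theorem exists_isUnitFlow_sum_eq (hst : s ≠ t) {n : ℕ}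
    (hcut : ∀ F ⊆ G.edgeSet, ¬(G.deleteEdges F).Reachable s t → n ≤ F.ncard) :
    ∃ f, IsUnitFlow G s t f ∧ ∑ b, f s b = n := by
  classical
  suffices ∀ m ≤ n, ∃ f, IsUnitFlow G s t f ∧ ∑ b, f s b = m from this n le_rfl
  intro m hm
  induction m with
  | zero => exact ⟨0, .zero, by simp⟩
  | succ m ih =>
    obtain ⟨f, hf, hval⟩ := ih (by omega)
    rcases hf.exists_succ_or_exists_cut hst with ⟨g, hg, hgval⟩ | ⟨F, hFG, hF, hFcard⟩
    · exact ⟨g, hg, by rw [hgval, hval]; push_cast; ring⟩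
    · have := hcut F hFG hF
      omega

end Flow
end SimpleGraph

theorem menger_link_version_general
    (V : Type) [Fintype V] (G : SimpleGraph V)
    (u v : V) (huv : u ≠ v) (k : ℕ) :
    (∃ P : Fin k → G.Walk u v,
      (∀ i : Fin k, (P i).IsPath) ∧
      (∀ i j : Fin k, i ≠ j → ∀ e : Sym2 V, e ∈ (P i).edges → e ∉ (P j).edges)) ↔
    (∀ F : Set (Sym2 V), F ⊆ G.edgeSet →
      ¬ (G.deleteEdges F).Reachable u v → k ≤ F.ncard) := by
  classical
  constructor
  · rintro ⟨P, -, hP⟩ F - hF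
    simpa using G.card_le_ncard_of_not_reachable_deleteEdges P hP hF
  · intro hcut
    obtain ⟨f, hf, hval⟩ := SimpleGraph.exists_isUnitFlow_sum_eq huv hcut
    obtain ⟨P, hP, -, hdisj⟩ := hf.exists_pairwise_disjoint_paths huv k hval.ge
    exact ⟨P, hP, hdisj⟩

/-- Menger's theorem, link version: there exist `k` pairwise edge-disjoint `u`–`v`
paths iff every set of edges whose removal disconnects `u` from `v` has at least
`k` elements. -/
theorem menger_link_version
    (V : Type) [Fintype V] [DecidableEq V] (G : SimpleGraph V)
    (u v : V) (huv : u ≠ v) (k : ℕ) :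
    (∃ P : Fin k → G.Walk u v,
      (∀ i : Fin k, (P i).IsPath) ∧
      (∀ i j : Fin k, i ≠ j → ∀ e : Sym2 V, e ∈ (P i).edges → e ∉ (P j).edges)) ↔
    (∀ F : Set (Sym2 V), F ⊆ G.edgeSet →
      ¬ (G.deleteEdges F).Reachable u v → k ≤ F.ncard) :=
  menger_link_version_general V G u v huv k
end

section
/- (Menger's theorem, node version.) Let G be a simple graph on a finite vertex type V and let u v : V be distinct, non-adjacent vertices. For every k : ℕ, the following are equivalent: (i) there exist k paths from u to v in G that are pairwise internally vertex-disjoint (no two of them share any vertex other than u and v); (ii) every set S of vertices with u ∉ S and v ∉ S such that u and v are not connected in the subgraph of G induced on the complement of S satisfies k ≤ |S|. In particular, the maximum number of pairwise internally disjoint u–v paths equals the minimum number of nodes whose removal disconnects u from v. -/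
/-!
The heart is the set version: if every set meeting all walks from `A` to `B` has at least `k`
vertices, then there are `k` vertex-disjoint walks from `A` to `B`. Induct on the graph and pick an
edge `xy`. If `G - xy` still satisfies the hypothesis we are done. Otherwise `G - xy` has an
`A`–`B` separator `S` with `|S| = k - 1`, and `X = S ∪ {x, y}` separates `A` from `B` in `G`. A set separating `A`
(or `B`) from `X` in `G - xy` separates `A` from `B` in `G`, because a walk cut at its first vertex
in `X` cannot use `xy`. So induction gives `k` disjoint `A`–`X` paths and `k` disjoint `B`–`X`
paths in `G - xy`, each meeting `X` only at its end. A path of one family meets a path of the other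
only in a common endpoint, which lies in `S`; counting then shows that the endpoints of the two
families are `S ∪ {x}` and `S ∪ {y}` in some order. Joining the paths through `S` and the edge `xy`
gives the `k` walks in `G`.

The node version is the set version for the neighbourhoods of `u` and `v`: every `u`–`v` walk
contains a walk from a neighbour of `u` to a neighbour of `v` avoiding `u` and `v`.
-/

namespace Equiv

variable {α : Type*}

theorem swap_apply_eq_self_of_mem [DecidableEq α] {S : Set α} {x y c : α} (hx : x ∉ S) (hy : y ∉ S)
    (hc : swap x y c ∈ S) : swap x y c = c :=
  (swap_apply_of_ne_of_ne (ne_of_mem_of_not_mem hc hx) (ne_of_mem_of_not_mem hc hy)).symm.trans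
    (swap_apply_self _ _ _)

theorem swap_mem_of_ncard_eq [Finite α] [DecidableEq α] {S R R' : Set α} {x y c : α}
    (hx : x ∉ S) (hy : y ∉ S) (hxy : x ≠ y)
    (hR : R ⊆ insert x (insert y S)) (hR' : R' ⊆ insert x (insert y S)) (hRR' : R ∩ R' ⊆ S)
    (hRc : R.ncard = S.ncard + 1) (hR'c : R'.ncard = S.ncard + 1) (hc : c ∈ R) :
    swap x y c ∈ R' := by
  have hX : (insert x (insert y S)).ncard = S.ncard + 2 := by
    rw [Set.ncard_insert_of_notMem (by simp [hxy, hx]), Set.ncard_insert_of_notMem hy]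
  have hinter : R ∩ R' = S := by
    refine Set.eq_of_subset_of_ncard_le hRR' ?_
    have := Set.ncard_union_add_ncard_inter R R'
    have := Set.ncard_le_ncard (Set.union_subset hR hR')
    omega
  by_cases hcS : c ∈ S
  · rw [swap_apply_of_ne_of_ne (ne_of_mem_of_not_mem hcS hx) (ne_of_mem_of_not_mem hcS hy)]
    exact (hinter ▸ hcS : c ∈ R ∩ R').2
  by_contra hsw
  have hR'S : R' ⊆ S := fun w hw ↦ by
    have hwc : w ≠ c := fun hwc ↦ hcS (hRR' ⟨hc, hwc ▸ hw⟩)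
    have hws : w ≠ swap x y c := fun hws ↦ hsw (hws ▸ hw)
    rcases hR hc with rfl | rfl | hc' <;> rcases hR' hw with rfl | rfl | hw'
    all_goals simp_all
  have := Set.ncard_le_ncard hR'S
  omega

end Equiv

namespace SimpleGraph

variable {V : Type*} {G H : SimpleGraph V} {A B S T X : Set V}

def Separates (G : SimpleGraph V) (A B S : Set V) : Prop :=
  ∀ ⦃a b : V⦄, a ∈ A → b ∈ B → ∀ p : G.Walk a b, ∃ w ∈ p.support, w ∈ S

structure Linkage (G : SimpleGraph V) (A B : Set V) (ι : Type*) where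
  src : ι → V
  tgt : ι → V
  walk : ∀ i, G.Walk (src i) (tgt i)
  src_mem : ∀ i, src i ∈ A
  tgt_mem : ∀ i, tgt i ∈ B
  pairwise_disjoint : Pairwise fun i j ↦ (walk i).support.Disjoint (walk j).support

namespace Walk

variable {a b : V}

theorem exists_isPath_to_first_mem [DecidableEq V] (p : G.Walk a b) (hb : b ∈ X) :
    ∃ c ∈ X, ∃ q : G.Walk a c, q.IsPath ∧ q.support ⊆ p.support ∧
      ∀ w ∈ q.support, w ∈ X → w = c := by
  induction p with
  | nil => exact ⟨_, hb, nil, .nil, List.Subset.refl _, by simp⟩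
  | @cons a a' b h p ih =>
    by_cases ha : a ∈ X
    · exact ⟨a, ha, nil, .nil, by simp, by simp⟩
    obtain ⟨c, hc, q, -, hqp, hqX⟩ := ih hb
    have hsub := (cons h q).support_bypass_subset_support
    refine ⟨c, hc, (cons h q).bypass, bypass_isPath _,
      List.Subset.trans hsub (by simpa using List.cons_subset_cons a hqp), fun w hw hwX ↦ ?_⟩
    obtain rfl | hw := List.mem_cons.1 (hsub hw)
    exacts [absurd hwX ha, hqX w hw hwX]

theorem exists_adj_walk_notMem_support (p : G.Walk a b) (hab : a ≠ b) :
    ∃ c, G.Adj c b ∧ ∃ q : G.Walk a c, q.support ⊆ p.support ∧ b ∉ q.support := by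
  induction p with
  | nil => exact absurd rfl hab
  | @cons a a' b h p ih =>
    by_cases ha' : a' = b
    · subst ha'
      exact ⟨a, h, nil, by simp, by simpa using hab.symm⟩
    obtain ⟨c, hcb, q, hqp, hbq⟩ := ih ha'
    exact ⟨c, hcb, cons h q, by simpa using List.cons_subset_cons a hqp, by simp [hab.symm, hbq]⟩

theorem eq_of_mem_support_takeUntil [DecidableEq V] {c w z : V} {p : G.Walk a c} (hp : p.IsPath)
    (hpX : ∀ y ∈ p.support, y ∈ X → y = c) (hw : w ∈ p.support)
    (hz : z ∈ (p.takeUntil w hw).support) (hzX : z ∈ X) : z = c ∧ w = c := by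
  have hzc : z = c := hpX z (p.support_takeUntil_subset_support hw hz) hzX
  refine ⟨hzc, by_contra fun hwc ↦ ?_⟩
  exact endpoint_notMem_support_takeUntil hp hw (Ne.symm hwc) (hzc ▸ hz)

end Walk

namespace Separates

theorem symm (h : G.Separates A B S) : G.Separates B A S := fun _ _ hb ha p ↦ by
  simpa using h ha hb p.reverse

theorem mono (h : G.Separates A B S) (hST : S ⊆ T) : G.Separates A B T := fun _ _ ha hb p ↦
  (h ha hb p).imp fun _ ↦ And.imp_right (@hST _)

theorem insert_of_deleteEdges {x y : V} (h : (G.deleteEdges {s(x, y)}).Separates A B S) :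
    G.Separates A B (insert x S) := by
  intro a b ha hb p
  by_cases hx : x ∈ p.support
  · exact ⟨x, hx, Set.mem_insert _ _⟩
  obtain ⟨w, hw, hwS⟩ :=
    h ha hb (p.toDeleteEdge s(x, y) fun he ↦ hx (p.fst_mem_support_of_mem_edges he))
  exact ⟨w, by simpa using hw, Set.mem_insert_of_mem _ hwS⟩

theorem of_deleteEdges [DecidableEq V] {x y : V} (h : (G.deleteEdges {s(x, y)}).Separates A X T)
    (hxy : x ≠ y) (hX : G.Separates A B X) (hx : x ∈ X) (hy : y ∈ X) :
    G.Separates A B T := by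
  intro a b ha hb p
  obtain ⟨w, hw, hwX⟩ := hX ha hb p
  obtain ⟨c, hc, q, -, hqp, hqX⟩ := (p.takeUntil w hw).exists_isPath_to_first_mem hwX
  have he : s(x, y) ∉ q.edges := fun he ↦ hxy <|
    (hqX x (q.fst_mem_support_of_mem_edges he) hx).trans
      (hqX y (q.snd_mem_support_of_mem_edges he) hy).symm
  obtain ⟨z, hz, hzT⟩ := h ha hc (q.toDeleteEdge _ he)
  exact ⟨z, p.support_takeUntil_subset_support hw (hqp (by simpa using hz)), hzT⟩

theorem eq_of_mem_support_of_mem_support [DecidableEq V] (hS : G.Separates A B S) (hSX : S ⊆ X)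
    {a b c d w : V} (ha : a ∈ A) (hb : b ∈ B) {p : G.Walk a c} {q : G.Walk b d}
    (hp : p.IsPath) (hpX : ∀ z ∈ p.support, z ∈ X → z = c)
    (hq : q.IsPath) (hqX : ∀ z ∈ q.support, z ∈ X → z = d)
    (hwp : w ∈ p.support) (hwq : w ∈ q.support) : w = c ∧ w = d ∧ w ∈ S := by
  obtain ⟨z, hz, hzS⟩ := hS ha hb ((p.takeUntil w hwp).append (q.takeUntil w hwq).reverse)
  rw [Walk.mem_support_append_iff, Walk.support_reverse, List.mem_reverse] at hz
  rcases hz with hz | hz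
  · obtain ⟨rfl, rfl⟩ := Walk.eq_of_mem_support_takeUntil hp hpX hwp hz (hSX hzS)
    exact ⟨rfl, hqX _ hwq (hSX hzS), hzS⟩
  · obtain ⟨rfl, rfl⟩ := Walk.eq_of_mem_support_takeUntil hq hqX hwq hz (hSX hzS)
    exact ⟨hpX _ hwp (hSX hzS), rfl, hzS⟩

end Separates

theorem separates_bot_inter : (⊥ : SimpleGraph V).Separates A B (A ∩ B) := by
  rintro a b ha hb (_ | ⟨hab, _⟩)
  · exact ⟨a, by simp, ha, hb⟩
  · exact ((bot_adj _ _).1 hab).elim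

theorem separates_singleton_iff {u v : V} (hu : u ∉ S) (hv : v ∉ S) :
    G.Separates {u} {v} S ↔ ¬ (G.induce Sᶜ).Reachable ⟨u, hu⟩ ⟨v, hv⟩ := by
  constructor
  · rintro hS ⟨p⟩
    let f := (Embedding.induce Sᶜ (G := G)).toHom
    obtain ⟨w, hw, hwS⟩ := hS (a := f ⟨u, hu⟩) (b := f ⟨v, hv⟩) rfl rfl (p.map f)
    rw [Walk.support_map] at hw
    obtain ⟨w', -, rfl⟩ := List.mem_map.1 hw
    exact w'.2 hwS
  · rintro h a b rfl rfl p
    by_contra! hp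
    exact h ⟨p.induce Sᶜ hp⟩

namespace Linkage

variable {ι : Type*}

def mapLe (L : G.Linkage A B ι) (h : G ≤ H) : H.Linkage A B ι where
  src := L.src
  tgt := L.tgt
  walk i := (L.walk i).mapLe h
  src_mem := L.src_mem
  tgt_mem := L.tgt_mem
  pairwise_disjoint _ _ hij := by simpa using L.pairwise_disjoint hij

theorem tgt_injective (L : G.Linkage A B ι) : Function.Injective L.tgt := fun i j h ↦
  by_contra fun hij ↦ L.pairwise_disjoint hij (L.walk i).end_mem_support
    (by rw [h]; exact (L.walk j).end_mem_support)

def IsTight (L : G.Linkage A B ι) : Prop :=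
  ∀ i, (L.walk i).IsPath ∧ ∀ w ∈ (L.walk i).support, w ∈ B → w = L.tgt i

theorem exists_isTight [DecidableEq V] (L : G.Linkage A B ι) :
    ∃ L' : G.Linkage A B ι, L'.IsTight := by
  choose c hc q hq hqL hqB using fun i ↦ (L.walk i).exists_isPath_to_first_mem (L.tgt_mem i)
  exact ⟨⟨L.src, c, q, L.src_mem, hc, fun i j hij w hwi hwj ↦
    L.pairwise_disjoint hij (hqL i hwi) (hqL j hwj)⟩, fun i ↦ ⟨hq i, hqB i⟩⟩

end Linkage

theorem nonempty_linkage_of_le_ncard_inter [Finite V] {k : ℕ} (h : k ≤ (A ∩ B).ncard) :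
    Nonempty (G.Linkage A B (Fin k)) := by
  have := Fintype.ofFinite ↥(A ∩ B)
  obtain ⟨e⟩ := Function.Embedding.nonempty_of_card_le (α := Fin k) (β := ↥(A ∩ B))
    (by rwa [Fintype.card_fin, ← Nat.card_eq_fintype_card, Nat.card_coe_set_eq])
  exact ⟨⟨fun i ↦ e i, fun i ↦ e i, fun _ ↦ .nil, fun i ↦ (e i).2.1, fun i ↦ (e i).2.2,
    fun _ _ hij ↦ by simpa [Subtype.val_inj] using (e.injective.ne hij).symm⟩⟩

theorem Adj.exists_walk_swap [DecidableEq V] {x y : V} (h : G.Adj x y) (c : V) :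
    ∃ l : G.Walk c (Equiv.swap x y c), ∀ w ∈ l.support, w = c ∨ w = Equiv.swap x y c := by
  by_cases hcx : c = x
  · subst hcx
    rw [Equiv.swap_apply_left]
    exact ⟨h.toWalk, by simp⟩
  by_cases hcy : c = y
  · subst hcy
    rw [Equiv.swap_apply_right]
    exact ⟨h.symm.toWalk, by simp⟩
  rw [Equiv.swap_apply_of_ne_of_ne hcx hcy]
  exact ⟨.nil, by simp⟩

theorem Linkage.splice [Finite V] [DecidableEq V] {x y : V} {k : ℕ} (hxy : G.Adj x y)
    (hHG : H ≤ G) (hS : H.Separates A B S) (hx : x ∉ S) (hy : y ∉ S) (hk : S.ncard + 1 = k)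
    (P : H.Linkage A (insert x (insert y S)) (Fin k)) (hP : P.IsTight)
    (Q : H.Linkage B (insert x (insert y S)) (Fin k)) (hQ : Q.IsTight) :
    Nonempty (G.Linkage A B (Fin k)) := by
  have common : ∀ i j w, w ∈ (P.walk i).support → w ∈ (Q.walk j).support →
      w = P.tgt i ∧ w = Q.tgt j ∧ w ∈ S := fun i j w hi hj ↦
    hS.eq_of_mem_support_of_mem_support (fun _ hs ↦ .inr (.inr hs)) (P.src_mem i) (Q.src_mem j)
      (hP i).1 (hP i).2 (hQ j).1 (hQ j).2 hi hj
  have hcard {C : Set V} (L : H.Linkage C (insert x (insert y S)) (Fin k)) :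
      (Set.range L.tgt).ncard = S.ncard + 1 := by
    rw [Set.ncard_range_of_injective L.tgt_injective, Nat.card_eq_fintype_card,
      Fintype.card_fin, hk]
  have hswap (i : Fin k) : ∃ j, Q.tgt j = Equiv.swap x y (P.tgt i) :=
    Equiv.swap_mem_of_ncard_eq hx hy hxy.ne (Set.range_subset_iff.2 P.tgt_mem)
      (Set.range_subset_iff.2 Q.tgt_mem)
      (by
        rintro _ ⟨⟨i, rfl⟩, ⟨j, hj⟩⟩
        exact (common i j _ (P.walk i).end_mem_support (hj ▸ (Q.walk j).end_mem_support)).2.2)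
      (hcard P) (hcard Q) ⟨i, rfl⟩
  choose j hj using hswap
  have hj_inj : Function.Injective j := fun i i' h ↦
    P.tgt_injective ((Equiv.swap x y).injective (by rw [← hj, ← hj, h]))
  choose l hl using fun i ↦ hxy.exists_walk_swap (P.tgt i)
  let W i : G.Walk (P.src i) (Q.src (j i)) := ((P.walk i).mapLe hHG).append
    (((l i).copy rfl (hj i).symm).append ((Q.walk (j i)).mapLe hHG).reverse)
  have hW i w (hw : w ∈ (W i).support) : w ∈ (P.walk i).support ∨ w ∈ (Q.walk (j i)).support := by
    simp only [W, Walk.mem_support_append_iff, Walk.support_mapLe_eq_support, Walk.support_copy,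
      Walk.support_reverse, List.mem_reverse] at hw
    rcases hw with hw | hw | hw
    · exact .inl hw
    · rcases hl i w hw with rfl | rfl
      · exact .inl (P.walk i).end_mem_support
      · exact .inr (hj i ▸ (Q.walk (j i)).end_mem_support)
    · exact .inr hw
  have cross i i' w (h : w ∈ (P.walk i).support) (h' : w ∈ (Q.walk (j i')).support) : i = i' := by
    obtain ⟨rfl, hw, hwS⟩ := common i (j i') w h h'
    rw [hj] at hw
    exact P.tgt_injective (hw.trans (Equiv.swap_apply_eq_self_of_mem hx hy (hw ▸ hwS)))
  refine ⟨⟨P.src, fun i ↦ Q.src (j i), W, P.src_mem, fun i ↦ Q.src_mem _,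
    fun i i' hii' w hw hw' ↦ ?_⟩⟩
  rcases hW i w hw with h | h <;> rcases hW i' w hw' with h' | h'
  · exact P.pairwise_disjoint hii' h h'
  · exact hii' (cross i i' w h h')
  · exact hii' (cross i' i w h' h).symm
  · exact Q.pairwise_disjoint (hj_inj.ne hii') h h'

theorem nonempty_linkage_of_forall_separates_le_ncard [Finite V] (G : SimpleGraph V)
    (A B : Set V) (k : ℕ) (h : ∀ S, G.Separates A B S → k ≤ S.ncard) :
    Nonempty (G.Linkage A B (Fin k)) := by
  classical
  induction G using WellFoundedLT.induction generalizing A B with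
  | _ G ih =>
  rcases eq_or_ne G ⊥ with rfl | hG
  · exact nonempty_linkage_of_le_ncard_inter (h _ separates_bot_inter)
  obtain ⟨x, y, hxy⟩ := ne_bot_iff_exists_adj.1 hG
  set H := G.deleteEdges {s(x, y)}
  have hHG : H < G := (deleteEdges_le _).lt_of_ne fun hHG ↦ by
    rw [← hHG] at hxy
    exact (deleteEdges_adj.1 hxy).2 rfl
  by_cases hH : ∀ S, H.Separates A B S → k ≤ S.ncard
  · exact (ih H hHG A B hH).map (·.mapLe hHG.le)
  push Not at hH
  obtain ⟨S, hS, hSk⟩ := hH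
  have hSx := h _ hS.insert_of_deleteEdges
  have hSy := h _ (show (G.deleteEdges {s(y, x)}).Separates A B S by
    rwa [Sym2.eq_swap]).insert_of_deleteEdges
  have hx : x ∉ S := fun hx ↦ by rw [Set.insert_eq_of_mem hx] at hSx; omega
  have hy : y ∉ S := fun hy ↦ by rw [Set.insert_eq_of_mem hy] at hSy; omega
  have hk : S.ncard + 1 = k := by have := Set.ncard_insert_le x S; omega
  have hX : G.Separates A B (insert x (insert y S)) :=
    hS.insert_of_deleteEdges.mono (Set.insert_subset_insert (Set.subset_insert _ _))
  obtain ⟨P⟩ := ih H hHG A _ fun T hT ↦ h T (hT.of_deleteEdges hxy.ne hX (by simp) (by simp))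
  obtain ⟨Q⟩ := ih H hHG B _ fun T hT ↦
    h T (hT.of_deleteEdges hxy.ne hX.symm (by simp) (by simp)).symm
  obtain ⟨P, hP⟩ := P.exists_isTight
  obtain ⟨Q, hQ⟩ := Q.exists_isTight
  exact Linkage.splice hxy hHG.le hS hx hy hk P hP Q hQ

theorem le_ncard_of_separates [Finite V] {u v : V} {k : ℕ} (hu : u ∉ S) (hv : v ∉ S)
    (hS : G.Separates {u} {v} S) (P : Fin k → G.Walk u v)
    (hP : ∀ i j, i ≠ j → ∀ w, w ∈ (P i).support → w ∈ (P j).support → w = u ∨ w = v) :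
    k ≤ S.ncard := by
  choose c hcP hcS using fun i ↦ hS rfl rfl (P i)
  have hc : Function.Injective c := fun i j hij ↦ by_contra fun hne ↦ by
    rcases hP i j hne (c i) (hcP i) (hij ▸ hcP j) with h | h
    exacts [hu (h ▸ hcS i), hv (h ▸ hcS i)]
  simpa using Set.ncard_le_ncard_of_injOn (s := .univ) c (fun i _ ↦ hcS i) hc.injOn

theorem le_ncard_of_separates_neighborSet [Finite V] {u v : V} {k : ℕ} (huv : u ≠ v)
    (hadj : ¬ G.Adj u v) (h : ∀ S, u ∉ S → v ∉ S → G.Separates {u} {v} S → k ≤ S.ncard)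
    (hT : G.Separates (G.neighborSet u) (G.neighborSet v) T) : k ≤ T.ncard := by
  refine (h (T \ {u, v}) (by simp) (by simp) ?_).trans (Set.ncard_le_ncard Set.sdiff_subset)
  rintro _ _ rfl rfl p
  obtain ⟨b, hbv, q, hqp, hvq⟩ := p.exists_adj_walk_notMem_support huv
  obtain ⟨a, hau, r, hrq, hur⟩ :=
    q.reverse.exists_adj_walk_notMem_support fun hbu ↦ hadj (hbu ▸ hbv)
  obtain ⟨w, hw, hwT⟩ := hT hau.symm hbv.symm r.reverse
  have hw' : w ∈ q.support := by simpa using hrq (by simpa using hw)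
  refine ⟨w, hqp hw', hwT, ?_⟩
  rintro (rfl | rfl)
  exacts [hur (by simpa using hw), hvq hw']

theorem Linkage.exists_internallyDisjoint_paths [DecidableEq V] {u v : V} {ι : Type*}
    (L : G.Linkage (G.neighborSet u) (G.neighborSet v) ι) :
    ∃ P : ι → G.Walk u v, (∀ i, (P i).IsPath) ∧
      ∀ i j, i ≠ j → ∀ w, w ∈ (P i).support → w ∈ (P j).support → w = u ∨ w = v := by
  let W i : G.Walk u v := .cons ((G.mem_neighborSet _ _).1 (L.src_mem i))
    ((L.walk i).concat ((G.mem_neighborSet _ _).1 (L.tgt_mem i)).symm)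
  have hW i w (hw : w ∈ (W i).bypass.support) (hwu : w ≠ u) (hwv : w ≠ v) :
      w ∈ (L.walk i).support := by
    have := (W i).support_bypass_subset_support hw
    simp only [W, Walk.support_cons, Walk.support_concat, List.mem_cons, List.mem_append] at this
    tauto
  refine ⟨fun i ↦ (W i).bypass, fun i ↦ (W i).bypass_isPath, fun i j hij w hi hj ↦ ?_⟩
  by_contra! ⟨hwu, hwv⟩
  exact L.pairwise_disjoint hij (hW i w hi hwu hwv) (hW j w hj hwu hwv)

end SimpleGraph

/-- Menger's theorem, node version: there exist `k` pairwise internally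
vertex-disjoint `u`–`v` paths iff every set of (internal) vertices whose removal
disconnects `u` from `v` has at least `k` elements. -/
theorem menger_node_version
    (V : Type) [Fintype V] [DecidableEq V] (G : SimpleGraph V)
    (u v : V) (huv : u ≠ v) (hadj : ¬ G.Adj u v) (k : ℕ) :
    (∃ P : Fin k → G.Walk u v,
      (∀ i : Fin k, (P i).IsPath) ∧
      (∀ i j : Fin k, i ≠ j → ∀ w : V,
        w ∈ (P i).support → w ∈ (P j).support → w = u ∨ w = v)) ↔
    (∀ (S : Set V) (hu : u ∉ S) (hv : v ∉ S),
      ¬ (G.induce Sᶜ).Reachable ⟨u, hu⟩ ⟨v, hv⟩ → k ≤ S.ncard) := by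
  constructor
  · rintro ⟨P, -, hP⟩ S hu hv hS
    exact SimpleGraph.le_ncard_of_separates hu hv ((G.separates_singleton_iff hu hv).2 hS) P hP
  · intro h
    obtain ⟨L⟩ := G.nonempty_linkage_of_forall_separates_le_ncard _ _ k fun T ↦
      SimpleGraph.le_ncard_of_separates_neighborSet huv hadj fun S hu hv hS ↦
        h S hu hv ((G.separates_singleton_iff hu hv).1 hS)
    exact L.exists_internallyDisjoint_paths
end

section
/- Let n m : ℕ, let w : Matrix (Fin n) (Fin n) ℝ be the consensus weight matrix, A : Matrix (Fin m) (Fin m) ℝ the system matrix, and for each i : Fin n let K i, B i : Matrix (Fin m) (Fin m) ℝ be the local observer gain and local observation matrix of CAV i. Suppose the local estimation errors e, e' : Fin n → Fin m → ℝ and noise terms ζ : Fin n → Fin m → ℝ satisfy, for every i : Fin n, e i = p i - (K i * B i).mulVec (p i) + ζ i, where p i := ∑ j, (w i j) • (A.mulVec (e' j)). Then the stacked global error satisfies the linear recursion driven by W ⊗ A − K̄ B̄ (W ⊗ A): defining Q := Matrix.kroneckerMap (· * ·) w A on Fin n × Fin m, and the block-diagonal matrices K̄, B̄ on Fin n ×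 Fin m by K̄ (i,k) (j,l) = if i = j then K i k l else 0 and B̄ (i,k) (j,l) = if i = j then B i k l else 0, one has (fun p : Fin n × Fin m => e p.1 p.2) = (Q - K̄ * B̄ * Q).mulVec (fun p => e' p.1 p.2) + (fun p => ζ p.1 p.2). (Derivation of the global error dynamics e_k = (W ⊗ A − K D_C (W ⊗ A)) e_{k−1} + ζ_k of the distributed observer.) -/
lemma blockDiag_mulVec {n m : ℕ} (M : Fin n → Matrix (Fin m) (Fin m) ℝ)
    (u : Fin n × Fin m → ℝ) :
    (Matrix.of fun p q : Fin n × Fin m =>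
        if p.1 = q.1 then M p.1 p.2 q.2 else 0).mulVec u
      = fun p => (M p.1).mulVec (fun l => u (p.1, l)) p.2 := by
  funext p
  simp [Matrix.mulVec, dotProduct, Fintype.sum_prod_type, ite_mul,
    Finset.sum_ite_eq, Finset.sum_ite_eq']

lemma kron_mulVec {n m : ℕ} (w : Matrix (Fin n) (Fin n) ℝ)
    (A : Matrix (Fin m) (Fin m) ℝ) (v : Fin n → Fin m → ℝ) :
    (Matrix.kroneckerMap (· * ·) w A).mulVec (fun p : Fin n × Fin m => v p.1 p.2)
      = fun p => (∑ j, w p.1 j • A.mulVec (v j)) p.2 := by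
  funext p
  simp [Matrix.mulVec, dotProduct, Fintype.sum_prod_type, Finset.mul_sum,
    mul_assoc, mul_left_comm]

/-- Derivation of the global error dynamics
`e_k = (W ⊗ A − K D_C (W ⊗ A)) e_{k−1} + ζ_k` of the distributed observer. -/
theorem global_error_dynamics
    (n m : ℕ) (w : Matrix (Fin n) (Fin n) ℝ) (A : Matrix (Fin m) (Fin m) ℝ)
    (K B : Fin n → Matrix (Fin m) (Fin m) ℝ)
    (e e' ζ : Fin n → Fin m → ℝ)
    (h : ∀ i : Fin n,
      e i = (∑ j, w i j • A.mulVec (e' j))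
        - (K i * B i).mulVec (∑ j, w i j • A.mulVec (e' j)) + ζ i) :
    (fun p : Fin n × Fin m => e p.1 p.2) =
      ((Matrix.kroneckerMap (· * ·) w A)
          - (Matrix.of fun p q : Fin n × Fin m =>
              if p.1 = q.1 then K p.1 p.2 q.2 else 0)
            * (Matrix.of fun p q : Fin n × Fin m =>
              if p.1 = q.1 then B p.1 p.2 q.2 else 0)
            * (Matrix.kroneckerMap (· * ·) w A)).mulVec
        (fun p : Fin n × Fin m => e' p.1 p.2)
      + (fun p : Fin n × Fin m => ζ p.1 p.2) := by
  funext p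
  obtain ⟨i, k⟩ := p
  have h' := congrFun (h i) k
  rw [Matrix.sub_mulVec, ← Matrix.mulVec_mulVec, ← Matrix.mulVec_mulVec,
    kron_mulVec, blockDiag_mulVec, blockDiag_mulVec]
  simp only [Pi.add_apply, Pi.sub_apply]
  rw [h']
  simp [Matrix.mulVec_mulVec]
  congr 1
  funext l
  simp
end
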